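/- Let S be a finite set of nonzero vectors in ℤ^n and let σ_1, …, σ_N be pointed polyhedral cones in ℝ^n, each of which is the set of nonnegative real combinations of some finite subset of S, and whose union is all of ℝ^n. Let W ⊆ ℝ^n be a real linear subspace with 1 ≤ dim W ≤ n − 1, and suppose that for each i the intersection σ_i ∩ W is a face of σ_i. Then S is 'special': there exist k distinct elements v_1, …, v_k ∈ S with 1 ≤ k ≤ n and positive integers a_1, …, a_k such that a_1 v_1 + ⋯ + a_k v_k = 0. (This is a faithful combinatorial rendering of Proposition 1.7: for a proper surjective toric morphism f : X → Y with dim Y < dim X induced by a linear map with kernel W, each cone of the fan of X meets W in a face, the resulting fiber fan is complete in W, and hence X 'general' forces Y to be a point.) -/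

import Mathlib

/-- The canonical map `ℤ^n → ℝ^n`. -/
def toReal {n : ℕ} (v : Fin n → ℤ) : Fin n → ℝ := fun i => (v i : ℝ)

/-- A finite set `S` of vectors in `ℤ^n` is *special* if there exist `k` distinct
elements `v 0, …, v (k-1)` of `S` with `1 ≤ k ≤ n` and positive integers
`a 0, …, a (k-1)` such that `∑ i, a i • v i = 0`. -/
def IsSpecial (n : ℕ) (S : Finset (Fin n → ℤ)) : Prop :=
  ∃ (k : ℕ) (v : Fin k → (Fin n → ℤ)) (a : Fin k → ℤ),
    1 ≤ k ∧ k ≤ n ∧ Function.Injective v ∧ (∀ i, v i ∈ S) ∧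
    (∀ i, 0 < a i) ∧ ∑ i, a i • v i = 0

/-- The cone in `ℝ^n` generated by a finite set `T` of integer vectors: all nonnegative
real linear combinations of (the real images of) the elements of `T`. -/
def coneOf {n : ℕ} (T : Finset (Fin n → ℤ)) : Set (Fin n → ℝ) :=
  {x | ∃ c : (Fin n → ℤ) → ℝ, (∀ v, 0 ≤ c v) ∧ x = ∑ v ∈ T, c v • toReal v}

/-! A nonzero `w ∈ W` and its negative both lie in cones of the fan, hence in the faces cut out
by `W`, so each is a nonnegative combination of generators lying in `W`; adding the two gives a
positive relation among those generators. A positive relation with inclusion-minimal support `U`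
spans all relations on `U`, so all but one element of `U` are linearly independent in `W`
(whence `#U ≤ dim W + 1 ≤ n`). Being dependent over `ℝ`, the integer vectors of `U` are dependent
over `ℤ`; that integer relation is a nonzero multiple of the positive real one, hence positive up
to sign. -/

def HasPosRelation (𝕜 : Type*) {V ι : Type*} [Field 𝕜] [LinearOrder 𝕜] [AddCommGroup V]
    [Module 𝕜 V] (f : ι → V) (U : Finset ι) : Prop :=
  U.Nonempty ∧ ∃ c : ι → 𝕜, (∀ i ∈ U, 0 < c i) ∧ ∑ i ∈ U, c i • f i = 0

section PosRelation

variable {𝕜 V ι : Type*} [Field 𝕜] [LinearOrder 𝕜] [AddCommGroup V] [Module 𝕜 V] {f : ι → V}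

theorem hasPosRelation_filter_ne_zero {s : Finset ι} {c : ι → 𝕜} (hc : ∀ i ∈ s, 0 ≤ c i)
    (hsum : ∑ i ∈ s, c i • f i = 0) (hne : ∃ i ∈ s, c i ≠ 0) :
    HasPosRelation 𝕜 f (s.filter (c · ≠ 0)) := by
  obtain ⟨i, hi, hci⟩ := hne
  refine ⟨⟨i, Finset.mem_filter.2 ⟨hi, hci⟩⟩, c, fun j hj => ?_, ?_⟩
  · obtain ⟨hj, hcj⟩ := Finset.mem_filter.1 hj
    exact (hc j hj).lt_of_ne' hcj
  · rw [Finset.sum_filter_of_ne (p := (c · ≠ 0)) fun j _ h hcj => h (by rw [hcj, zero_smul])]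
    exact hsum

variable [IsStrictOrderedRing 𝕜]

/-- Subtracting from `b` the largest multiple of `c` that keeps all coefficients nonnegative leaves
a nonnegative relation vanishing somewhere on `U`; by minimality it vanishes on all of `U`. -/
theorem Minimal.eq_mul_of_hasPosRelation {U : Finset ι} (hU : Minimal (HasPosRelation 𝕜 f) U)
    {c : ι → 𝕜} (hc : ∀ i ∈ U, 0 < c i) (hcf : ∑ i ∈ U, c i • f i = 0)
    {b : ι → 𝕜} (hbf : ∑ i ∈ U, b i • f i = 0) : ∃ t : 𝕜, ∀ i ∈ U, b i = t * c i := by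
  obtain ⟨i₀, hi₀, hmin⟩ := U.exists_min_image (fun i => b i / c i) hU.1.1
  set t := b i₀ / c i₀
  set d : ι → 𝕜 := fun i => b i - t * c i
  have hd : ∀ i ∈ U, 0 ≤ d i := fun i hi =>
    sub_nonneg.2 ((le_div_iff₀ (hc i hi)).1 (hmin i hi))
  have hdi₀ : d i₀ = 0 := by simp only [d, t, div_mul_cancel₀ _ (hc i₀ hi₀).ne', sub_self]
  have hdf : ∑ i ∈ U, d i • f i = 0 := by
    simp only [d, sub_smul, mul_smul, Finset.sum_sub_distrib, hbf, ← Finset.smul_sum, hcf,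
      smul_zero, sub_zero]
  refine ⟨t, fun i hi => sub_eq_zero.1 ?_⟩
  by_contra hdi
  have hsub := hU.2 (hasPosRelation_filter_ne_zero hd hdf ⟨i, hi, hdi⟩) (Finset.filter_subset _ _)
  exact (Finset.mem_filter.1 (hsub hi₀)).2 hdi₀

theorem Minimal.linearIndepOn_erase [DecidableEq ι] {U : Finset ι}
    (hU : Minimal (HasPosRelation 𝕜 f) U) {u : ι} (hu : u ∈ U) :
    LinearIndepOn 𝕜 f ↑(U.erase u) := by
  obtain ⟨c, hc, hcf⟩ := hU.1.2
  rw [linearIndepOn_finset_iff]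
  intro b hbf i hi
  have hbf' : ∑ j ∈ U, Function.update b u 0 j • f j = 0 := by
    rw [← Finset.sum_erase U (a := u) (by simp), ← hbf]
    exact Finset.sum_congr rfl fun j hj => by rw [Function.update_of_ne (Finset.ne_of_mem_erase hj)]
  obtain ⟨t, ht⟩ := hU.eq_mul_of_hasPosRelation hc hcf hbf'
  have ht0 : t = 0 := by
    simpa [(hc u hu).ne'] using (ht u hu).symm
  simpa [Function.update_of_ne (Finset.ne_of_mem_erase hi), ht0] using
    ht i (Finset.mem_of_mem_erase hi)

theorem Minimal.card_le_finrank_add_one [FiniteDimensional 𝕜 V] {U : Finset ι}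
    (hU : Minimal (HasPosRelation 𝕜 f) U) {W : Submodule 𝕜 V} (hUW : ∀ i ∈ U, f i ∈ W) :
    U.card ≤ Module.finrank 𝕜 W + 1 := by
  classical
  obtain ⟨u, hu⟩ := hU.1.1
  have hind : LinearIndependent 𝕜 fun i : U.erase u =>
      (⟨f i, hUW i (Finset.mem_of_mem_erase i.2)⟩ : W) :=
    LinearIndependent.of_comp W.subtype (hU.linearIndepOn_erase hu)
  have := hind.fintype_card_le_finrank
  rw [Fintype.card_coe, Finset.card_erase_of_mem hu] at this
  omega

end PosRelation

theorem toReal_sum_smul {n : ℕ} (U : Finset (Fin n → ℤ)) (a : (Fin n → ℤ) → ℤ) :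
    toReal (∑ v ∈ U, a v • v) = ∑ v ∈ U, (a v : ℝ) • toReal v := by
  ext i
  simp [toReal, Finset.sum_apply]

theorem linearIndepOn_toReal_iff {n : ℕ} {U : Set (Fin n → ℤ)} :
    LinearIndepOn ℝ toReal U ↔ LinearIndepOn ℤ id U :=
  linearIndependent_algebraMap_comp_iff (v := fun v : U => (v : Fin n → ℤ))

theorem Minimal.exists_pos_int_relation {n : ℕ} {U : Finset (Fin n → ℤ)}
    (hU : Minimal (HasPosRelation ℝ toReal) U) :
    ∃ a : (Fin n → ℤ) → ℤ, (∀ v ∈ U, 0 < a v) ∧ ∑ v ∈ U, a v • v = 0 := by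
  obtain ⟨⟨u, hu⟩, c, hc, hcf⟩ := hU.1
  have hdep : ¬ LinearIndepOn ℤ id (U : Set (Fin n → ℤ)) := by
    rw [← linearIndepOn_toReal_iff, linearIndepOn_finset_iff]
    exact fun h => (hc u hu).ne' (h c hcf u hu)
  obtain ⟨g, hgf, v₀, hv₀, hgv₀⟩ := not_linearIndepOn_finset_iff.1 hdep
  replace hgf : ∑ v ∈ U, g v • v = 0 := hgf
  have hgf' : ∑ v ∈ U, (g v : ℝ) • toReal v = 0 := by
    rw [← toReal_sum_smul, hgf]
    exact funext fun _ => Int.cast_zero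
  obtain ⟨t, ht⟩ := hU.eq_mul_of_hasPosRelation hc hcf hgf'
  have ht0 : t ≠ 0 := by
    rintro rfl
    exact hgv₀ (by exact_mod_cast (ht v₀ hv₀).trans (zero_mul _))
  rcases ht0.lt_or_gt with htneg | htpos
  · refine ⟨-g, fun v hv => ?_, ?_⟩
    · have : (0 : ℝ) < -g v := by
        rw [ht v hv]; exact neg_pos.2 (mul_neg_of_neg_of_pos htneg (hc v hv))
      exact_mod_cast this
    · simp only [Pi.neg_apply, neg_smul, Finset.sum_neg_distrib, hgf, neg_zero]
  · refine ⟨g, fun v hv => ?_, hgf⟩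
    have : (0 : ℝ) < g v := by rw [ht v hv]; exact mul_pos htpos (hc v hv)
    exact_mod_cast this

theorem isSpecial_of_finset {n : ℕ} {S U : Finset (Fin n → ℤ)} (hUS : U ⊆ S) (hU : U.Nonempty)
    (hcard : U.card ≤ n) {a : (Fin n → ℤ) → ℤ} (ha : ∀ v ∈ U, 0 < a v)
    (hsum : ∑ v ∈ U, a v • v = 0) : IsSpecial n S := by
  let e := U.equivFin.symm
  refine ⟨U.card, fun j => e j, fun j => a (e j), hU.card_pos, hcard,
    Subtype.val_injective.comp e.injective, fun j => hUS (e j).2, fun j => ha _ (e j).2, ?_⟩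
  rw [e.sum_comp (fun v => a v • (v : Fin n → ℤ)), Finset.sum_coe_sort U fun v => a v • v, hsum]

theorem coneOf_mono {n : ℕ} {T T' : Finset (Fin n → ℤ)} (h : T ⊆ T') : coneOf T ⊆ coneOf T' := by
  classical
  rintro x ⟨c, hc, rfl⟩
  refine ⟨fun v => if v ∈ T then c v else 0,
    fun v => by by_cases hv : v ∈ T <;> simp [hv, hc], ?_⟩
  simp only [ite_smul, zero_smul, Finset.sum_ite_mem, Finset.inter_eq_right.2 h]

open Classical in
theorem mem_coneOf_filter_of_mem_face {n : ℕ} {T : Finset (Fin n → ℤ)}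
    {W : Submodule ℝ (Fin n → ℝ)} {ℓ : (Fin n → ℝ) →ₗ[ℝ] ℝ} (hℓ : ∀ x ∈ coneOf T, 0 ≤ ℓ x)
    (hface : coneOf T ∩ (W : Set (Fin n → ℝ)) = {x ∈ coneOf T | ℓ x = 0})
    {x : Fin n → ℝ} (hx : x ∈ coneOf T) (hxW : x ∈ W) :
    x ∈ coneOf (T.filter fun v => toReal v ∈ W) := by
  obtain ⟨c, hc, rfl⟩ := hx
  have hT : ∀ v ∈ T, toReal v ∈ coneOf T := fun v hv =>
    ⟨Pi.single v 1, fun u => by by_cases hu : u = v <;> simp [hu],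
      by simp [Pi.single_apply, hv]⟩
  have hℓ0 : ∑ v ∈ T, c v * ℓ (toReal v) = 0 := by
    have hx : ∑ v ∈ T, c v • toReal v ∈ coneOf T ∩ W := ⟨⟨c, hc, rfl⟩, hxW⟩
    rw [hface] at hx
    simpa [map_sum] using hx.2
  have hW : ∀ v ∈ T, c v ≠ 0 → toReal v ∈ W := fun v hv hcv => by
    have hterm := (Finset.sum_eq_zero_iff_of_nonneg fun u hu =>
      mul_nonneg (hc u) (hℓ _ (hT u hu))).1 hℓ0 v hv
    have : toReal v ∈ {x ∈ coneOf T | ℓ x = 0} :=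
      ⟨hT v hv, (mul_eq_zero.1 hterm).resolve_left hcv⟩
    exact (hface ▸ this : toReal v ∈ coneOf T ∩ W).2
  exact ⟨c, hc, (Finset.sum_filter_of_ne fun v hv h => hW v hv fun hcv =>
    h (by rw [hcv, zero_smul])).symm⟩

theorem exists_hasPosRelation_of_neg_mem_coneOf {n : ℕ} {T : Finset (Fin n → ℤ)}
    {x : Fin n → ℝ} (hx0 : x ≠ 0) (hx : x ∈ coneOf T) (hnx : -x ∈ coneOf T) :
    ∃ U ⊆ T, HasPosRelation ℝ toReal U := by
  obtain ⟨c₁, hc₁, rfl⟩ := hx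
  obtain ⟨c₂, hc₂, hsum₂⟩ := hnx
  have hne : ∃ v ∈ T, c₁ v + c₂ v ≠ 0 := by
    by_contra! h
    refine hx0 (Finset.sum_eq_zero fun v hv => ?_)
    rw [show c₁ v = 0 by linarith [h v hv, hc₁ v, hc₂ v], zero_smul]
  refine ⟨_, Finset.filter_subset _ _,
    hasPosRelation_filter_ne_zero (fun v _ => add_nonneg (hc₁ v) (hc₂ v)) ?_ hne⟩
  simp only [add_smul, Finset.sum_add_distrib, ← hsum₂, add_neg_cancel]

theorem special_of_fan_meeting_subspace_in_faces_general (n N : ℕ)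
    (S : Finset (Fin n → ℤ))
    (σ : Fin N → Set (Fin n → ℝ))
    (hgen : ∀ i, ∃ T : Finset (Fin n → ℤ), T ⊆ S ∧ σ i = coneOf T)
    (hcover : ∀ x : Fin n → ℝ, ∃ i, x ∈ σ i)
    (W : Submodule ℝ (Fin n → ℝ))
    (hdim₁ : 1 ≤ Module.finrank ℝ W) (hdim₂ : Module.finrank ℝ W ≤ n - 1)
    (hface : ∀ i, ∃ ℓ : (Fin n → ℝ) →ₗ[ℝ] ℝ,
      (∀ x ∈ σ i, 0 ≤ ℓ x) ∧ σ i ∩ (W : Set (Fin n → ℝ)) = {x ∈ σ i | ℓ x = 0}) :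
    IsSpecial n S := by
  classical
  set P := S.filter fun v => toReal v ∈ W
  have hWP : ∀ x ∈ W, x ∈ coneOf P := fun x hxW => by
    obtain ⟨i, hxi⟩ := hcover x
    obtain ⟨T, hTS, hσ⟩ := hgen i
    obtain ⟨ℓ, hℓ, hσW⟩ := hface i
    rw [hσ] at hxi hℓ hσW
    exact coneOf_mono (Finset.filter_subset_filter _ hTS)
      (mem_coneOf_filter_of_mem_face hℓ hσW hxi hxW)
  obtain ⟨w, hwW, hw0⟩ := W.exists_mem_ne_zero_of_ne_bot fun h => by simp [h] at hdim₁
  obtain ⟨U₀, hU₀P, hU₀⟩ :=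
    exists_hasPosRelation_of_neg_mem_coneOf hw0 (hWP w hwW) (hWP (-w) (W.neg_mem hwW))
  obtain ⟨U, hUU₀, hU⟩ := exists_minimal_le_of_wellFoundedLT _ U₀ hU₀
  have hUP : U ⊆ P := hUU₀.trans hU₀P
  have hcard := hU.card_le_finrank_add_one fun v hv => (Finset.mem_filter.1 (hUP hv)).2
  obtain ⟨a, ha, hsum⟩ := hU.exists_pos_int_relation
  exact isSpecial_of_finset (hUP.trans (Finset.filter_subset _ _)) hU.1.1 (by omega) ha hsum

/-- Let `S` be a finite set of nonzero vectors in `ℤ^n` and let `σ 0, …, σ (N-1)` be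
pointed cones, each generated by a finite subset of `S`, whose union is all of `ℝ^n`.
Let `W ⊆ ℝ^n` be a linear subspace with `1 ≤ dim W ≤ n - 1` such that each `σ i ∩ W`
is a face of `σ i` (cut out by a linear functional nonnegative on `σ i`).  Then `S`
is *special*. -/
theorem special_of_fan_meeting_subspace_in_faces (n N : ℕ)
    (S : Finset (Fin n → ℤ)) (hnz : ∀ v ∈ S, v ≠ 0)
    (σ : Fin N → Set (Fin n → ℝ))
    (hgen : ∀ i, ∃ T : Finset (Fin n → ℤ), T ⊆ S ∧ σ i = coneOf T)
    (hpointed : ∀ i, ∀ x ∈ σ i, -x ∈ σ i → x = 0)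
    (hcover : ∀ x : Fin n → ℝ, ∃ i, x ∈ σ i)
    (W : Submodule ℝ (Fin n → ℝ))
    (hdim₁ : 1 ≤ Module.finrank ℝ W) (hdim₂ : Module.finrank ℝ W ≤ n - 1)
    (hface : ∀ i, ∃ ℓ : (Fin n → ℝ) →ₗ[ℝ] ℝ,
      (∀ x ∈ σ i, 0 ≤ ℓ x) ∧ σ i ∩ (W : Set (Fin n → ℝ)) = {x ∈ σ i | ℓ x = 0}) :
    IsSpecial n S :=
  special_of_fan_meeting_subspace_in_faces_general n N S σ hgen hcover W hdim₁ hdim₂ hface
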